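/- For every element x of Q, every u ∈ {a, b, e, f}, and all integers i and j: x^{cⁱ u} = x^{u c⁻ⁱ} and x^{dʲ u} = x^{u d⁻ʲ}; that is, S_u ∘ S_cⁱ = S_c⁻ⁱ ∘ S_u and S_u ∘ S_dʲ = S_d⁻ʲ ∘ S_u as maps on Q. -/

import Mathlib

/-- A quandle as in the paper: a set with operations `▷` and `▷⁻¹` satisfying
axioms A1, A2, A3. -/
class PaperQuandle (Q : Type*) where
  rhd : Q → Q → Q
  rhdInv : Q → Q → Q
  fix : ∀ x : Q, rhd x x = x
  inv_rhd : ∀ x y : Q, rhdInv (rhd x y) y = x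
  rhd_inv : ∀ x y : Q, rhd (rhdInv x y) y = x
  self_distrib : ∀ x y z : Q, rhd (rhd x y) z = rhd (rhd x z) (rhd y z)

infixl:65 " ▷ " => PaperQuandle.rhd
infixl:65 " ▷⁻¹ " => PaperQuandle.rhdInv

/-- The point symmetry at `u`, as a permutation of `Q`: `x ↦ x ▷ u`,
with inverse `x ↦ x ▷⁻¹ u`. -/
def ptSym {Q : Type*} [PaperQuandle Q] (u : Q) : Equiv.Perm Q where
  toFun x := x ▷ u
  invFun x := x ▷⁻¹ u
  left_inv x := PaperQuandle.inv_rhd x u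
  right_inv x := PaperQuandle.rhd_inv x u

/-!
All relations are identities between point symmetries in the permutation group of `Q`, where the
claim says that the involutions `S_a, S_b, S_e, S_f` invert `S_c` and `S_d`. With `q = S_a S_b`
the relations give `S_b = S_a q`, `S_f = S_e q`, `S_d = S_e S_a` and `S_c = q^k S_a S_e`; as `S_f`
is an involution, `S_e` inverts `q`, and so does `S_a`. Then all the `q^j S_a`, `q^j S_e` are
involutions, and `S_c`, `S_d` can be written as a product of two of them with any prescribed one of
`S_a, S_b, S_e, S_f` as a factor. Each factor of a product of two involutions inverts it.
-/

section Involution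
variable {G : Type*} [Group G] {s t u x : G}

theorem mul_zpow_eq_zpow_neg_mul (hu : u * u = 1) (h : u * x * u = x⁻¹) (j : ℤ) :
    u * x ^ j = x ^ (-j) * u := by
  have hu' : u⁻¹ = u := inv_eq_of_mul_eq_one_right hu
  rw [← mul_inv_eq_iff_eq_mul, ← conj_zpow, hu', h, inv_zpow, zpow_neg]

theorem mul_mul_self_of_conj_eq_inv (h : u * x * u = x⁻¹) : u * x * (u * x) = 1 := by
  rw [← mul_assoc, h, inv_mul_cancel]

theorem zpow_mul_mul_self_of_conj_eq_inv (hu : u * u = 1) (h : u * x * u = x⁻¹) (j : ℤ) :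
    x ^ j * u * (x ^ j * u) = 1 := by
  rw [mul_assoc, ← mul_assoc u, mul_zpow_eq_zpow_neg_mul hu h, mul_assoc, hu, mul_one,
    zpow_neg, mul_inv_cancel]

theorem conj_mul_eq_inv_left (hs : s * s = 1) (ht : t * t = 1) :
    s * (s * t) * s = (s * t)⁻¹ := by
  rw [mul_inv_rev, inv_eq_of_mul_eq_one_right hs, inv_eq_of_mul_eq_one_right ht, ← mul_assoc,
    hs, one_mul]

theorem conj_mul_eq_inv_right (hs : s * s = 1) (ht : t * t = 1) :
    t * (s * t) * t = (s * t)⁻¹ := by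
  rw [mul_inv_rev, inv_eq_of_mul_eq_one_right hs, inv_eq_of_mul_eq_one_right ht, mul_assoc,
    mul_assoc, ht, mul_one]

end Involution

theorem conj_eq_inv_of_reflections {G : Type*} [Group G] {q a e : G} (ha : a * a = 1)
    (he : e * e = 1) (haq : a * q * a = q⁻¹) (heq : e * q * e = q⁻¹) (k : ℤ) :
    ∀ u ∈ ({a, a * q, e, e * q} : Set G),
      u * (q ^ k * a * e) * u = (q ^ k * a * e)⁻¹ ∧ u * (e * a) * u = (e * a)⁻¹ := by
  have hqa : ∀ j : ℤ, q ^ j * a * (q ^ j * a) = 1 := zpow_mul_mul_self_of_conj_eq_inv ha haq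
  have hqe : ∀ j : ℤ, q ^ j * e * (q ^ j * e) = 1 := zpow_mul_mul_self_of_conj_eq_inv he heq
  have haq' : a * q * (a * q) = 1 := mul_mul_self_of_conj_eq_inv haq
  have heq' : e * q * (e * q) = 1 := mul_mul_self_of_conj_eq_inv heq
  have hCa : q ^ k * a * e = a * (q ^ (-k) * e) := by
    rw [← mul_assoc, mul_zpow_eq_zpow_neg_mul ha haq, neg_neg]
  have hCb : q ^ k * a * e = a * q * (q ^ (-(k + 1)) * e) := by
    rw [mul_assoc a, ← mul_assoc q, ← zpow_one_add, hCa]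
    congr 3
    ring
  have hCf : q ^ k * a * e = q ^ (k - 1) * a * (e * q) := by
    have heq₁ : e * q = q⁻¹ * e := by simpa using mul_zpow_eq_zpow_neg_mul he heq 1
    have haq₁ : a * q⁻¹ = q * a := by simpa using mul_zpow_eq_zpow_neg_mul ha haq (-1)
    rw [heq₁, ← mul_assoc, mul_assoc (q ^ (k - 1)) a, haq₁, ← mul_assoc (q ^ (k - 1)),
      ← zpow_add_one, sub_add_cancel]
  have hD : e * a = e * q * (a * q) := by
    have hqaq : q * a * q = a := by
      have h : a * (q * a * q) = 1 := by simpa only [mul_assoc] using haq'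
      rw [eq_inv_of_mul_eq_one_right h, inv_eq_of_mul_eq_one_right ha]
    rw [mul_assoc, ← mul_assoc q, hqaq]
  rintro u (rfl | rfl | rfl | rfl)
  · rw [hCa]
    exact ⟨conj_mul_eq_inv_left ha (hqe _), conj_mul_eq_inv_right he ha⟩
  · rw [hCb, hD]
    exact ⟨conj_mul_eq_inv_left haq' (hqe _), conj_mul_eq_inv_right heq' haq'⟩
  · exact ⟨conj_mul_eq_inv_right (hqa _) he, conj_mul_eq_inv_left he ha⟩
  · rw [hCf, hD]
    exact ⟨conj_mul_eq_inv_right (hqa _) heq', conj_mul_eq_inv_left heq' haq'⟩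

theorem mul_zpow_eq_zpow_neg_mul_of_graph_relations {G : Type*} [Group G] {A B C D E F : G}
    (k : ℤ) (hA : A * A = 1) (hB : B * B = 1) (hE : E * E = 1) (hF : F * F = 1)
    (hdea : A * E * D = 1) (hcke : E * A * (B * A) ^ k * C = 1)
    (hfca : A * (B * A) ^ (k - 1) * C * F = 1) :
    ∀ u ∈ ({A, B, E, F} : Set G), ∀ i j : ℤ,
      u * C ^ i = C ^ (-i) * u ∧ u * D ^ j = D ^ (-j) * u := by
  have hA' : A⁻¹ = A := inv_eq_of_mul_eq_one_right hA
  have hE' : E⁻¹ = E := inv_eq_of_mul_eq_one_right hE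
  have hC₀ : C = (E * A * (B * A) ^ k)⁻¹ := eq_inv_of_mul_eq_one_right hcke
  have hC : C = (A * B) ^ k * A * E := by
    rw [hC₀, mul_inv_rev, mul_inv_rev, ← inv_zpow, mul_inv_rev, hA', hE',
      inv_eq_of_mul_eq_one_right hB, mul_assoc]
  have hD : D = E * A := by
    rw [eq_inv_of_mul_eq_one_right hdea, mul_inv_rev, hA', hE']
  have hBq : B = A * (A * B) := by rw [← mul_assoc, hA, one_mul]
  have hFq : F = E * (A * B) := by
    rw [eq_inv_of_mul_eq_one_right hfca, hC₀]
    group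
  have hAq : A * (A * B) * A = (A * B)⁻¹ := by
    rw [← hBq, mul_inv_rev, hA', inv_eq_of_mul_eq_one_right hB]
  have hEq : E * (A * B) * E = (A * B)⁻¹ :=
    eq_inv_of_mul_eq_one_left (by simpa only [hFq, mul_assoc] using hF)
  intro u hu i j
  have hu₂ : u * u = 1 := by rcases hu with rfl | rfl | rfl | rfl <;> assumption
  rw [hBq, hFq] at hu
  obtain ⟨huC, huD⟩ := conj_eq_inv_of_reflections hA hE hAq hEq k u hu
  rw [hC, hD]
  exact ⟨mul_zpow_eq_zpow_neg_mul hu₂ huC i, mul_zpow_eq_zpow_neg_mul hu₂ huD j⟩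

theorem stmt_8
    {Q : Type*} [PaperQuandle Q] (k : ℤ) (a b c d e f : Q)
    (rel_a : ∀ x : Q, x ▷ a ▷ a = x)
    (rel_b : ∀ x : Q, x ▷ b ▷ b = x)
    (rel_e : ∀ x : Q, x ▷ e ▷ e = x)
    (rel_f : ∀ x : Q, x ▷ f ▷ f = x)
    (rel_dea : ∀ x : Q, x ▷ d ▷ e ▷ a = x)
    (rel_cke : ∀ x : Q, (((ptSym b * ptSym a) ^ k) (x ▷ c)) ▷ a ▷ e = x)
    (rel_fca : ∀ x : Q, (((ptSym b * ptSym a) ^ (k - 1)) (x ▷ f ▷ c)) ▷ a = x) :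
    ∀ x : Q, ∀ u ∈ ({a, b, e, f} : Set Q), ∀ i j : ℤ,
      ((ptSym c ^ i) x) ▷ u = (ptSym c ^ (-i)) (x ▷ u) ∧
      ((ptSym d ^ j) x) ▷ u = (ptSym d ^ (-j)) (x ▷ u) := by
  intro x u hu i j
  have hu' : ptSym u ∈ ({ptSym a, ptSym b, ptSym e, ptSym f} : Set (Equiv.Perm Q)) := by
    rcases hu with rfl | rfl | rfl | rfl <;> simp
  -- `Equiv.Perm` composes right to left: `x ▷ d ▷ e ▷ a = (ptSym a * ptSym e * ptSym d) x`.
  obtain ⟨hc, hd⟩ := mul_zpow_eq_zpow_neg_mul_of_graph_relations (C := ptSym c) (D := ptSym d) k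
    (Equiv.ext rel_a) (Equiv.ext rel_b) (Equiv.ext rel_e) (Equiv.ext rel_f) (Equiv.ext rel_dea)
    (Equiv.ext rel_cke) (Equiv.ext rel_fca) _ hu' i j
  exact ⟨DFunLike.congr_fun hc x, DFunLike.congr_fun hd x⟩
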